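/- Observation-level k-step factorization: for every exo-free policy π : S → PMF A, every k ≥ 1, every latent state z = (s,e) ∈ Z, every action a ∈ A and every observation x' ∈ X, the probability of observing x' after k steps factorizes as ((Pz^k(z,a)).bind(q))(x') = q(ψ(x'))(x') * Ps^k(s,a)(φ⋆(x')) * Te^k(e)(φe(x')). -/

import Mathlib

open scoped ENNReal BigOperators

/-- The `k`-step controller kernel (index `k : ℕ` represents `k+1` steps). -/
noncomputable def Psk {S A : Type*} (Ts : S → A → PMF S) (π : S → PMF A) :
    ℕ → S → A → PMF S
  | 0 => Ts
  | k + 1 => fun s a => (Ts s a).bind fun s1 => (π s1).bind fun a1 => Psk Ts π k s1 a1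

/-- The `k`-step exogenous kernel (index `k : ℕ` represents `k+1` steps). -/
noncomputable def Tek {E : Type*} (Te : E → PMF E) : ℕ → E → PMF E
  | 0 => Te
  | k + 1 => fun e => (Te e).bind (Tek Te k)

/-- The `k`-step joint kernel (index `k : ℕ` represents `k+1` steps). -/
noncomputable def Pzk {S E A : Type*} (T : S × E → A → PMF (S × E)) (π : S → PMF A) :
    ℕ → S × E → A → PMF (S × E)
  | 0 => T
  | k + 1 => fun z a => (T z a).bind fun z1 => (π z1.1).bind fun a1 => Pzk T π k z1 a1

/-!
Because the policy reads only the controller component, one step of the joint chain moves the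
controller and the exogenous component independently, so by induction the joint `k`-step kernel is
the product of the controller and exogenous `k`-step kernels. Since the decoder `ψ` is exact on the
emission supports, the observation `x'` can only be emitted from the latent state `ψ x'`.
-/

theorem Pzk_apply_eq_Psk_mul_Tek {S E A : Type*} {Ts : S → A → PMF S} {Te : E → PMF E}
    {T : S × E → A → PMF (S × E)}
    (hT : ∀ (s : S) (e : E) (a : A) (s' : S) (e' : E),
      T (s, e) a (s', e') = Ts s a s' * Te e e')
    (π : S → PMF A) (k : ℕ) (s : S) (e : E) (a : A) (s' : S) (e' : E) :
    Pzk T π k (s, e) a (s', e') = Psk Ts π k s a s' * Tek Te k e e' := by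
  induction k generalizing s e a with
  | zero => exact hT s e a s' e'
  | succ k ih =>
    have policy_step : ∀ s1 e1, ∑' a1, π s1 a1 * Pzk T π k (s1, e1) a1 (s', e') =
        (∑' a1, π s1 a1 * Psk Ts π k s1 a1 s') * Tek Te k e1 e' := fun s1 e1 => by
      simp only [ih, ← mul_assoc, ENNReal.tsum_mul_right]
    simp only [Pzk, Psk, Tek, PMF.bind_apply, ENNReal.tsum_prod', hT, policy_step]
    rw [← ENNReal.tsum_mul_right]
    refine tsum_congr fun s1 => ?_
    rw [← ENNReal.tsum_mul_left]
    exact tsum_congr fun e1 => by ring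

theorem PMF.bind_apply_of_decoder {Z X : Type*} (p : PMF Z) {q : Z → PMF X} {ψ : X → Z}
    (hψ : ∀ z x, x ∈ (q z).support → ψ x = z) (x : X) :
    (p.bind q) x = p (ψ x) * q (ψ x) x := by
  rw [PMF.bind_apply, tsum_eq_single (ψ x)]
  intro z hz
  rw [((q z).apply_eq_zero_iff x).mpr fun hx => hz (hψ z x hx).symm, mul_zero]

theorem observation_level_multi_step_factorization_general
    {S E A X : Type*}
    (Ts : S → A → PMF S) (Te : E → PMF E)
    (T : S × E → A → PMF (S × E))
    (hT : ∀ (s : S) (e : E) (a : A) (s' : S) (e' : E),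
      T (s, e) a (s', e') = Ts s a s' * Te e e')
    (π : S → PMF A)
    (q : S × E → PMF X)
    (ψ : X → S × E)
    (hψ : ∀ (z : S × E) (x : X), x ∈ (q z).support → ψ x = z)
    (k : ℕ) (s : S) (e : E) (a : A) (x' : X) :
    ((Pzk T π k (s, e) a).bind q) x' =
      q (ψ x') x' * Psk Ts π k s a (ψ x').1 * Tek Te k e (ψ x').2 := by
  rw [PMF.bind_apply_of_decoder _ hψ, mul_assoc, ← Pzk_apply_eq_Psk_mul_Tek hT]
  exact mul_comm _ _

/-- Observation-level `k`-step factorization: for every exo-free policy `π`, every `k ≥ 1`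
(here `k+1` with `k : ℕ`), every latent state `z = (s, e)`, action `a` and observation `x'`,
the probability of observing `x'` after `k` steps factorizes as
`q(ψ x') x' * Psk Ts π k s a (φ⋆ x') * Tek Te k e (φe x')`,
where `φ⋆ x' = (ψ x').1` and `φe x' = (ψ x').2`. -/
theorem observation_level_multi_step_factorization
    {S E A X : Type*} [Fintype S] [Fintype E] [Fintype A] [Fintype X]
    [Nonempty S] [Nonempty E] [Nonempty A] [Nonempty X]
    (Ts : S → A → PMF S) (Te : E → PMF E)
    (T : S × E → A → PMF (S × E))
    (hT : ∀ (s : S) (e : E) (a : A) (s' : S) (e' : E),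
      T (s, e) a (s', e') = Ts s a s' * Te e e')
    (π : S → PMF A)
    (q : S × E → PMF X)
    (hq : ∀ z z' : S × E, z ≠ z' → Disjoint (q z).support (q z').support)
    (ψ : X → S × E)
    (hψ : ∀ (z : S × E) (x : X), x ∈ (q z).support → ψ x = z)
    (k : ℕ) (s : S) (e : E) (a : A) (x' : X) :
    ((Pzk T π k (s, e) a).bind q) x' =
      q (ψ x') x' * Psk Ts π k s a (ψ x').1 * Tek Te k e (ψ x').2 :=
  observation_level_multi_step_factorization_general Ts Te T hT π q ψ hψ k s e a x'
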